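/- arXiv:1801.04198 — 2 statements merged into one kernel-verified Lean document; each statement's English description precedes it below -/
import Mathlib

section
/- The function C(x₁,x₃,p₁,p₃) = x₃²/2 + x₁ − 1/x₁ Poisson-commutes with the Hamiltonian H = p₁x₃ − p₃/x₁² − p₃ on the domain x₁ ≠ 0. -/
/-! `C` does not depend on the momenta, so `{C, H}` reduces to
`∂C/∂x₁ · ∂H/∂p₁ + ∂C/∂x₃ · ∂H/∂p₃ = (1 + 1/x₁²) x₃ + x₃ (-1/x₁² - 1) = 0`. -/

section
variable {𝕜 : Type*} [NontriviallyNormedField 𝕜]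

theorem hasDerivAt_add_sub_one_div (a : 𝕜) {x : 𝕜} (hx : x ≠ 0) :
    HasDerivAt (fun q => a + q - 1 / q) (1 + 1 / x ^ 2) x := by
  simpa [one_div] using ((hasDerivAt_id x).const_add a).fun_sub (hasDerivAt_inv hx)

theorem hasDerivAt_const_sub_div_sub (a b x : 𝕜) :
    HasDerivAt (fun q => a - q / b - q) (-(1 / b) - 1) x := by
  simpa [one_div] using (((hasDerivAt_id x).div_const b).const_sub a).fun_sub (hasDerivAt_id x)

end

/-- `C = x₃²/2 + x₁ - 1/x₁` Poisson-commutes with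
`H = p₁x₃ - p₃/x₁² - p₃` on `x₁ ≠ 0`, where
`{F,G} = ∂F/∂x₁ ∂G/∂p₁ + ∂F/∂x₃ ∂G/∂p₃ - ∂F/∂p₁ ∂G/∂x₁ - ∂F/∂p₃ ∂G/∂x₃`. -/
theorem poisson_commutes
    (C H : ℂ → ℂ → ℂ → ℂ → ℂ)
    (hC : ∀ x₁ x₃ p₁ p₃, C x₁ x₃ p₁ p₃ = x₃ ^ 2 / 2 + x₁ - 1 / x₁)
    (hH : ∀ x₁ x₃ p₁ p₃, H x₁ x₃ p₁ p₃ = p₁ * x₃ - p₃ / x₁ ^ 2 - p₃)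
    (x₁ x₃ p₁ p₃ : ℂ) (hx₁ : x₁ ≠ 0) :
    deriv (fun q => C q x₃ p₁ p₃) x₁ * deriv (fun q => H x₁ x₃ q p₃) p₁
      + deriv (fun q => C x₁ q p₁ p₃) x₃ * deriv (fun q => H x₁ x₃ p₁ q) p₃
      - deriv (fun q => C x₁ x₃ q p₃) p₁ * deriv (fun q => H q x₃ p₁ p₃) x₁
      - deriv (fun q => C x₁ x₃ p₁ q) p₃ * deriv (fun q => H x₁ q p₁ p₃) x₃ = 0 := by
  simp only [hC, hH, deriv_sub_const, deriv_add_const, deriv_const, zero_mul, sub_zero]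
  rw [(hasDerivAt_add_sub_one_div _ hx₁).deriv,
    (hasDerivAt_const_sub_div_sub (p₁ * x₃) (x₁ ^ 2) p₃).deriv,
    deriv_mul_const_field', deriv_div_const, deriv_pow_field, deriv_id'']
  ring
end

section
/- More generally, for constants c₁, c₂ ∈ ℂ, the function p₃(s) = (√(s² − Cs − 1)/√s)·(c₁ ∫ s^{3/2} (s² − Cs − 1)^{−3/2} ds + c₂) solves 2(C + 1/s − s) p₃'' − (1 + 1/s²) p₃' − 2p₃/s³ = 0 on a simply connected domain avoiding 0 and the zeros of s² − Cs − 1. -/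
/-!
Write `w = g / f`, so that `w² = φ` with `φ s = s - C - 1/s`; the equation is
`2φ p'' + φ' p' - φ'' p = 0`. Differentiating `w² = φ` gives `w' = φ' / (2w)`, from which `w`
solves the equation directly. The second solution comes from reduction of order: for `p = w q`
the equation becomes `2φ (w q'' + 2 w' q') + φ' w q' = 0`, which `q' = w⁻³` satisfies because
`φ' = 2 w w'`.
-/

open Filter Topology

section

variable {𝕜 : Type*} [NontriviallyNormedField 𝕜] [CharZero 𝕜]

theorem hasDerivAt_of_eventually_sq_eq {w φ : 𝕜 → 𝕜} {φ' z : 𝕜}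
    (hw : DifferentiableAt 𝕜 w z) (hwz : w z ≠ 0) (hsq : ∀ᶠ y in 𝓝 z, w y ^ 2 = φ y)
    (hφ : HasDerivAt φ φ' z) : HasDerivAt w (φ' / (2 * w z)) z := by
  have hsq' : HasDerivAt (fun y => w y ^ 2) (2 * w z * deriv w z) z := by
    simpa using hw.hasDerivAt.fun_pow 2
  have hφ_eq : φ' = 2 * w z * deriv w z := hφ.unique (hsq'.congr_of_eventuallyEq (by
    filter_upwards [hsq] with y hy using hy.symm))
  refine hw.hasDerivAt.congr_deriv ?_
  rw [hφ_eq]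
  field_simp

theorem hasDerivAt_sqrt_mul_primitive {w F : 𝕜 → 𝕜} {φ' z : 𝕜} (c₁ c₂ : 𝕜)
    (hw : HasDerivAt w (φ' / (2 * w z)) z) (hwz : w z ≠ 0) (hF : HasDerivAt F (w z ^ 3)⁻¹ z) :
    HasDerivAt (fun y => w y * (c₁ * F y + c₂))
      (φ' / (2 * w z) * (c₁ * F z + c₂) + c₁ / w z ^ 2) z := by
  refine (hw.mul ((hF.const_mul c₁).add_const c₂)).congr_deriv ?_
  field_simp

theorem sqrt_mul_primitive_solves_ode {U : Set 𝕜} {w φ φ' φ'' F : 𝕜 → 𝕜} (c₁ c₂ : 𝕜)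
    (hU : IsOpen U) (hw : DifferentiableOn 𝕜 w U) (hw0 : ∀ z ∈ U, w z ≠ 0)
    (hsq : ∀ z ∈ U, w z ^ 2 = φ z) (hφ : ∀ z ∈ U, HasDerivAt φ (φ' z) z)
    (hφ' : ∀ z ∈ U, HasDerivAt φ' (φ'' z) z) (hF : ∀ z ∈ U, HasDerivAt F (w z ^ 3)⁻¹ z) :
    ∀ z ∈ U,
      2 * φ z * deriv (deriv fun y => w y * (c₁ * F y + c₂)) z
        + φ' z * deriv (fun y => w y * (c₁ * F y + c₂)) z
        - φ'' z * (w z * (c₁ * F z + c₂)) = 0 := by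
  have hw' : ∀ z ∈ U, HasDerivAt w (φ' z / (2 * w z)) z := fun z hz =>
    hasDerivAt_of_eventually_sq_eq (hw.differentiableAt (hU.mem_nhds hz)) (hw0 z hz)
      (eventually_of_mem (hU.mem_nhds hz) hsq) (hφ z hz)
  have hp : ∀ z ∈ U, HasDerivAt (fun y => w y * (c₁ * F y + c₂))
      (φ' z / (2 * w z) * (c₁ * F z + c₂) + c₁ / w z ^ 2) z := fun z hz =>
    hasDerivAt_sqrt_mul_primitive c₁ c₂ (hw' z hz) (hw0 z hz) (hF z hz)
  intro z hz
  have hwz := hw0 z hz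
  have hp' := (((hφ' z hz).fun_div ((hw' z hz).const_mul 2) (by simpa)).fun_mul
    (((hF z hz).const_mul c₁).add_const c₂)).fun_add
    ((hasDerivAt_const z c₁).fun_div ((hw' z hz).fun_pow 2) (by simpa))
  have hderiv : deriv (fun y => w y * (c₁ * F y + c₂)) =ᶠ[𝓝 z]
      fun y => φ' y / (2 * w y) * (c₁ * F y + c₂) + c₁ / w y ^ 2 :=
    eventually_of_mem (hU.mem_nhds hz) fun y hy => (hp y hy).deriv
  rw [hderiv.deriv_eq, hp'.deriv, (hp z hz).deriv, ← hsq z hz]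
  field_simp
  ring

end

theorem general_solution_ode_general
    (C c₁ c₂ : ℂ) (U : Set ℂ) (hU : IsOpen U)
    (f g F : ℂ → ℂ)
    (hf : DifferentiableOn ℂ f U) (hg : DifferentiableOn ℂ g U)
    (hf2 : ∀ s ∈ U, (f s) ^ 2 = s) (hg2 : ∀ s ∈ U, (g s) ^ 2 = s ^ 2 - C * s - 1)
    (h0 : ∀ s ∈ U, s ≠ 0) (hroot : ∀ s ∈ U, s ^ 2 - C * s - 1 ≠ 0)
    (hF : ∀ s ∈ U, HasDerivAt F ((f s) ^ 3 / (g s) ^ 3) s) :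
    ∀ s ∈ U,
      2 * (C + 1 / s - s) *
          deriv (deriv (fun z => g z / f z * (c₁ * F z + c₂))) s
        - (1 + 1 / s ^ 2) * deriv (fun z => g z / f z * (c₁ * F z + c₂)) s
        - 2 * (g s / f s * (c₁ * F s + c₂)) / s ^ 3 = 0 := by
  have hf0 : ∀ s ∈ U, f s ≠ 0 := fun s hs h => h0 s hs (by rw [← hf2 s hs, h]; ring)
  have hg0 : ∀ s ∈ U, g s ≠ 0 := fun s hs h => hroot s hs (by rw [← hg2 s hs, h]; ring)
  have hφ : ∀ s ∈ U, HasDerivAt (fun z => z - C - z⁻¹) (1 + 1 / s ^ 2) s := fun s hs =>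
    (((hasDerivAt_id' s).sub_const C).sub (hasDerivAt_inv (h0 s hs))).congr_deriv (by ring)
  have hφ' : ∀ s ∈ U, HasDerivAt (fun z => 1 + 1 / z ^ 2) (-2 / s ^ 3) s := fun s hs => by
    have hs0 := h0 s hs
    refine (((hasDerivAt_const s (1 : ℂ)).fun_div ((hasDerivAt_id' s).fun_pow 2)
      (pow_ne_zero 2 hs0)).const_add 1).congr_deriv ?_
    field_simp
    ring
  intro s hs
  have hode := sqrt_mul_primitive_solves_ode (w := fun z => g z / f z) c₁ c₂ hU (hg.div hf hf0)
    (fun z hz => div_ne_zero (hg0 z hz) (hf0 z hz))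
    (fun z hz => by rw [div_pow, hf2 z hz, hg2 z hz]; field_simp [h0 z hz]) hφ hφ'
    (fun z hz => by simpa [div_pow] using hF z hz) s hs
  linear_combination -hode

/-- General solution: for constants `c₁, c₂ ∈ ℂ` and a holomorphic primitive `F`
of `s^{3/2}(s² - Cs - 1)^{-3/2} = f³/g³` (with `f = √s`, `g = √(s² - Cs - 1)`
fixed branches), `p₃(s) = (g/f)(c₁ F + c₂)` solves
`2(C + 1/s - s) p₃'' - (1 + 1/s²) p₃' - 2p₃/s³ = 0`. -/
theorem general_solution_ode
    (C c₁ c₂ : ℂ) (U : Set ℂ) (hU : IsOpen U) (hU' : IsPreconnected U)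
    (f g F : ℂ → ℂ)
    (hf : DifferentiableOn ℂ f U) (hg : DifferentiableOn ℂ g U)
    (hf2 : ∀ s ∈ U, (f s) ^ 2 = s) (hg2 : ∀ s ∈ U, (g s) ^ 2 = s ^ 2 - C * s - 1)
    (h0 : ∀ s ∈ U, s ≠ 0) (hroot : ∀ s ∈ U, s ^ 2 - C * s - 1 ≠ 0)
    (hF : ∀ s ∈ U, HasDerivAt F ((f s) ^ 3 / (g s) ^ 3) s) :
    ∀ s ∈ U,
      2 * (C + 1 / s - s) *
          deriv (deriv (fun z => g z / f z * (c₁ * F z + c₂))) s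
        - (1 + 1 / s ^ 2) * deriv (fun z => g z / f z * (c₁ * F z + c₂)) s
        - 2 * (g s / f s * (c₁ * F s + c₂)) / s ^ 3 = 0 :=
  general_solution_ode_general C c₁ c₂ U hU f g F hf hg hf2 hg2 h0 hroot hF
end
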